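/- arXiv:1410.4154 — 2 statements merged into one kernel-verified Lean document; each statement's English description precedes it below -/
import Mathlib

section
/- In the game G₅: there exists a Nash equilibrium whose leader expected reward is 2, and 2 is the maximum of the leader's expected reward over all Nash equilibria; however, for every memory bound b ∈ ℕ, every Nash equilibrium with memory bound b gives the leader expected reward 0. Moreover, for every rational c > 0, in the game c·G₅ obtained from G₅ by multiplying all rewards by c, there is a Nash equilibrium with leader expected reward 2c while every bounded-memory Nash equilibrium gives the leader expected reward 0; hence the gap between the leader's optimal Nash payoff and her optimal payoff over bounded-memory Nash equilibria can be made arbitrarily large. -/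
open scoped BigOperators

/-- A multi-player discounted sum game (MDSG) on sets of players `P`,
vertices `V` and actions `A`, all required to be finite (`A` nonempty).
The `owner` of a vertex chooses the action there; `tr` is the transition
function, `rew p v a` is the reward of player `p` for taking action `a`
at vertex `v`, `init` is the initial probability distribution on the
vertices, and `disc` is the discount factor. -/
structure MDSG (P V A : Type) : Type where
  fin_P : Finite P
  fin_V : Finite V
  fin_A : Finite A
  nonempty_A : Nonempty A
  owner : V → P
  tr : V → A → V
  rew : P → V → A → ℝ
  init : V → ℝ
  init_nonneg : ∀ v, 0 ≤ init v
  init_sum : ∑' v, init v = 1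
  disc : ℝ
  disc_pos : 0 < disc
  disc_lt_one : disc < 1

/-- A pure strategy profile: given the history (the list of vertex/action pairs
seen so far) and the current vertex, the owner of the current vertex chooses
an action.  The strategy of an individual player `p` is the restriction of the
profile to the vertices owned by `p`. -/
abbrev Profile (V A : Type) : Type := List (V × A) → V → A

namespace MDSG

variable {P V A : Type}

/-- The pair (history, current vertex) after `n` steps of the play of `σ` from `v`. -/
def histState (G : MDSG P V A) (σ : Profile V A) (v : V) : ℕ → List (V × A) × V
  | 0 => ([], v)
  | n + 1 =>
    let s := G.histState σ v n
    (s.1 ++ [(s.2, σ s.1 s.2)], G.tr s.2 (σ s.1 s.2))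

/-- The vertex visited at step `n` of the play of `σ` from `v`. -/
def playV (G : MDSG P V A) (σ : Profile V A) (v : V) (n : ℕ) : V :=
  (G.histState σ v n).2

/-- The action taken at step `n` of the play of `σ` from `v`. -/
def playA (G : MDSG P V A) (σ : Profile V A) (v : V) (n : ℕ) : A :=
  σ (G.histState σ v n).1 (G.playV σ v n)

/-- The discounted reward of player `p` on the play of `σ` from `v`. -/
noncomputable def reward (G : MDSG P V A) (p : P) (σ : Profile V A) (v : V) : ℝ :=
  ∑' i : ℕ, G.rew p (G.playV σ v i) (G.playA σ v i) * G.disc ^ i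

/-- The expected reward of player `p` under the strategy profile `σ`. -/
noncomputable def ER (G : MDSG P V A) (p : P) (σ : Profile V A) : ℝ :=
  ∑' v : V, G.init v * G.reward p σ v

/-- `σ'` differs from `σ` at most in the strategy of player `p`. -/
def DiffOnly (G : MDSG P V A) (σ σ' : Profile V A) (p : P) : Prop :=
  ∀ h v, G.owner v ≠ p → σ' h v = σ h v

/-- Nash equilibrium: no player can profit from a unilateral deviation. -/
def IsNash (G : MDSG P V A) (σ : Profile V A) : Prop :=
  ∀ p σ', G.DiffOnly σ σ' p → G.ER p σ' ≤ G.ER p σ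

/-- Leader strategy profile: no player other than the leader `l` can profit
from a unilateral deviation. -/
def IsLeaderSP (G : MDSG P V A) (l : P) (σ : Profile V A) : Prop :=
  ∀ p, p ≠ l → ∀ σ', G.DiffOnly σ σ' p → G.ER p σ' ≤ G.ER p σ

/-- `σ` is a (pure) strategy profile with memory bound `b`: there is a memory
set `M` with `|M| ≤ b`, an initial memory state, a memory update function and
a usage function producing all the actions of `σ`. -/
def MemBound (G : MDSG P V A) (σ : Profile V A) (b : ℕ) : Prop :=
  ∃ n : ℕ, n ≤ b ∧ ∃ (m₀ : Fin n) (μ : Fin n → V × A → Fin n) (u : Fin n → V → A),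
    ∀ h v, σ h v = u (h.foldl μ m₀) v

/-- `σ` is memoryless (positional): actions depend only on the current vertex. -/
def Positional (G : MDSG P V A) (σ : Profile V A) : Prop :=
  ∀ h h' v, σ h v = σ h' v

open Classical in
/-- Combination of a strategy for player `p` with a joint strategy of the other players. -/
noncomputable def combine (G : MDSG P V A) (p : P) (τp τo : Profile V A) : Profile V A :=
  fun h v => if G.owner v = p then τp h v else τo h v

/-- The lower value of player `p` at vertex `v`: the supremum over the pure
strategies of `p` of the infimum over the joint pure strategies of the other
players of the reward of `p` on the resulting play from `v`. -/
noncomputable def lowerValue (G : MDSG P V A) (p : P) (v : V) : ℝ :=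
  ⨆ τp : Profile V A, ⨅ τo : Profile V A, G.reward p (G.combine p τp τo) v

/-- The upper value of player `p` at vertex `v`. -/
noncomputable def upperValue (G : MDSG P V A) (p : P) (v : V) : ℝ :=
  ⨅ τo : Profile V A, ⨆ τp : Profile V A, G.reward p (G.combine p τp τo) v

/-- The history `h` contains a deviation from `σ` at position `i`. -/
def DeviatesAt (G : MDSG P V A) (σ : Profile V A) (h : List (V × A)) (i : ℕ) : Prop :=
  ∃ hi : i < h.length, (h.get ⟨i, hi⟩).2 ≠ σ (h.take i) (h.get ⟨i, hi⟩).1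

/-- Reward-and-punish profile: on every history that deviates from the
prescribed actions, every action depends only on the current vertex and on the
identity of the first player who deviated (all players follow a fixed
positional strategy depending only on the first deviator). -/
def IsRewardPunish (G : MDSG P V A) (σ : Profile V A) : Prop :=
  ∃ punish : P → V → A, ∀ (h : List (V × A)) (i : ℕ) (hi : i < h.length),
    G.DeviatesAt σ h i → (∀ j, j < i → ¬ G.DeviatesAt σ h j) →
    ∀ v, σ h v = punish (G.owner (h.get ⟨i, hi⟩).1) v

/-- The outcome plays of `σ` are generated with compliance memory bound `b`:
on every history on which all players have complied, the actions of `σ` are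
produced by a memory structure with at most `b` states. -/
def ComplianceMemBound (G : MDSG P V A) (σ : Profile V A) (b : ℕ) : Prop :=
  ∃ n : ℕ, n ≤ b ∧ ∃ (m₀ : Fin n) (μ : Fin n → V × A → Fin n) (u : Fin n → V → A),
    ∀ h : List (V × A), (∀ i, ¬ G.DeviatesAt σ h i) →
      ∀ v, σ h v = u (h.foldl μ m₀) v

/-- The set of stationary mixed decision vectors: an assignment of a
probability distribution over the actions to every vertex. -/
def simplexD (V A : Type) : Set (V → A → ℝ) :=
  {d | ∀ v, (∀ a, 0 ≤ d v a) ∧ ∑' a, d v a = 1}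

end MDSG
namespace MDSG

/-- The game `c·G₅` (Figure 6 of the paper, with all rewards scaled by `c`;
`G₅` itself is `G5 1`): three players `0` (player 1), `1` (player 2) and `2`
(the leader); five vertices `0, 1, 2, 3, 4` representing vertices 1, 2, 3 and
the sinks `s₁`, `s₂`; vertex `0` and sink `3` belong to player 1, vertex `1`
and sink `4` to player 2, and vertex `2` to the leader; actions `Bool`.
Vertex `0`: `true` moves to `1` with rewards `(0,0,0)`, `false` moves to the
sink `3` with rewards `(0,0,0)`.  Vertex `1`: `true` moves to `2` with rewards
`c·(-1,-1,1)`, `false` moves to the sink `4` with rewards `(0,0,0)`.  The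
sinks loop with rewards `(0,0,0)`.  Vertex `2` has two self-loops: `true` with
rewards `c·(1,0,1)` and `false` with rewards `c·(0,1,1)`.  Initial
distribution: point mass at `0`; discount factor `2/3`. -/
noncomputable def G5 (c : ℝ) : MDSG (Fin 3) (Fin 5) Bool where
  fin_P := inferInstance
  fin_V := inferInstance
  fin_A := inferInstance
  nonempty_A := inferInstance
  owner := ![0, 1, 2, 0, 1]
  tr := fun v a =>
    if v = 0 then (if a then 1 else 3)
    else if v = 1 then (if a then 2 else 4)
    else v
  rew := fun p v a =>
    c * (if v = 1 then (if a then (if p = 2 then 1 else -1) else 0)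
         else if v = 2 then
           (if p = 2 then 1
            else if p = 0 then (if a then 1 else 0)
            else (if a then 0 else 1))
         else 0)
  init := fun v => if v = 0 then 1 else 0
  init_nonneg := by intro v; (try dsimp only); split <;> norm_num
  init_sum := by simpa using tsum_ite_eq (0 : Fin 5) (1 : ℝ)
  disc := 2 / 3
  disc_pos := by norm_num
  disc_lt_one := by norm_num

end MDSG

/-!
The leader is rewarded only on the play that reaches her self-loops, and then she gets `2c`
whatever she plays there. On that play the followers get `c (4/9 x - 2/3)` and `c (2/3 - 4/9 x)`,
where `x` is the sum of `(2/3)^j` over the loop steps `j` at which she favours player 1. Each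
follower can secure `0` by escaping to its sink, so a Nash equilibrium reaching the loop needs
`x = 3/2`, and the greedy expansion of `3/2` in powers of `2/3` provides one. With finite memory
the loop actions are eventually periodic, which makes `x` a rational with odd denominator.
-/

open Finset

def EventuallyPeriodic {α : Type*} (f : ℕ → α) : Prop :=
  ∃ N p, 0 < p ∧ ∀ n, N ≤ n → f (n + p) = f n

theorem EventuallyPeriodic.comp {α β : Type*} {f : ℕ → α} (hf : EventuallyPeriodic f)
    (g : α → β) : EventuallyPeriodic (g ∘ f) := by
  obtain ⟨N, p, hp, h⟩ := hf
  exact ⟨N, p, hp, fun n hn => congrArg g (h n hn)⟩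

theorem eventuallyPeriodic_iterate {α : Type*} [Finite α] (g : α → α) (a : α) :
    EventuallyPeriodic fun n => g^[n] a := by
  obtain ⟨k, l, hne, heq⟩ := Finite.exists_ne_map_eq_of_infinite fun n => g^[n] a
  wlog hkl : k < l generalizing k l
  · exact this l k hne.symm heq.symm (by omega)
  refine ⟨k, l - k, by omega, fun n hn => ?_⟩
  obtain ⟨m, rfl⟩ := Nat.exists_eq_add_of_le hn
  show g^[k + m + (l - k)] a = g^[k + m] a
  rw [show k + m + (l - k) = m + l by omega, Function.iterate_add_apply, ← heq,
    ← Function.iterate_add_apply, add_comm]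

def oddDenomSubring : Subring ℝ where
  carrier := {x | ∃ m d : ℤ, Odd d ∧ x * d = m}
  zero_mem' := ⟨0, 1, odd_one, by simp⟩
  one_mem' := ⟨1, 1, odd_one, by simp⟩
  add_mem' := by
    rintro x y ⟨m, d, hd, hx⟩ ⟨n, e, he, hy⟩
    exact ⟨m * e + n * d, d * e, hd.mul he, by
      push_cast; linear_combination (e : ℝ) * hx + (d : ℝ) * hy⟩
  mul_mem' := by
    rintro x y ⟨m, d, hd, hx⟩ ⟨n, e, he, hy⟩
    exact ⟨m * n, d * e, hd.mul he, by
      push_cast; linear_combination (y * e) * hx + (m : ℝ) * hy⟩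
  neg_mem' := by
    rintro x ⟨m, d, hd, hx⟩
    exact ⟨-m, d, hd, by push_cast; linear_combination -hx⟩

theorem mem_oddDenomSubring_of_mul_mem {x : ℝ} {d : ℤ} (hd : Odd d)
    (h : x * d ∈ oddDenomSubring) : x ∈ oddDenomSubring := by
  obtain ⟨m, e, he, hx⟩ := h
  exact ⟨m, d * e, hd.mul he, by push_cast; linear_combination hx⟩

theorem two_div_three_mem_oddDenomSubring : (2 / 3 : ℝ) ∈ oddDenomSubring :=
  ⟨2, 3, ⟨1, rfl⟩, by norm_num⟩

theorem three_div_two_not_mem_oddDenomSubring : (3 / 2 : ℝ) ∉ oddDenomSubring := by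
  rintro ⟨m, d, hd, h⟩
  have h' : 3 * d = 2 * m := by
    exact_mod_cast (by linear_combination 2 * h : (3 : ℝ) * d = 2 * m)
  have hodd : Odd (3 * d) := (show Odd (3 : ℤ) from ⟨1, rfl⟩).mul hd
  exact Int.not_even_iff_odd.2 hodd (h' ▸ even_two_mul m)

noncomputable def twoThirdsSum (b : ℕ → Bool) : ℝ :=
  ∑' n, if b n then (2 / 3 : ℝ) ^ n else 0

theorem summable_twoThirds_ite (b : ℕ → Bool) :
    Summable fun n => if b n then (2 / 3 : ℝ) ^ n else 0 :=
  (summable_geometric_of_lt_one (r := 2 / 3) (by norm_num) (by norm_num)).of_nonneg_of_le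
    (fun n => by split_ifs <;> positivity) (fun n => by split_ifs; exacts [le_rfl, by positivity])

theorem twoThirdsSum_eq_sum_add (b : ℕ → Bool) (k : ℕ) :
    twoThirdsSum b = ∑ n ∈ range k, (if b n then (2 / 3 : ℝ) ^ n else 0) +
      (2 / 3) ^ k * twoThirdsSum fun n => b (n + k) := by
  rw [twoThirdsSum, ← (summable_twoThirds_ite b).sum_add_tsum_nat_add k, twoThirdsSum,
    ← tsum_mul_left]
  congr 1
  exact tsum_congr fun n => by split_ifs <;> ring

theorem twoThirdsSum_add_twoThirdsSum_not (b : ℕ → Bool) :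
    twoThirdsSum b + twoThirdsSum (fun n => !b n) = 3 := by
  rw [twoThirdsSum, twoThirdsSum,
    ← (summable_twoThirds_ite _).tsum_add (summable_twoThirds_ite _)]
  have h : ∀ n, ((if b n then (2 / 3 : ℝ) ^ n else 0) + if !b n then (2 / 3 : ℝ) ^ n else 0)
      = (2 / 3) ^ n := fun n => by cases b n <;> simp
  rw [tsum_congr h, tsum_geometric_of_lt_one (by norm_num) (by norm_num)]
  norm_num

theorem sum_twoThirds_ite_mem_oddDenomSubring (b : ℕ → Bool) (k : ℕ) :
    ∑ n ∈ range k, (if b n then (2 / 3 : ℝ) ^ n else 0) ∈ oddDenomSubring :=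
  Subring.sum_mem _ fun n _ => by
    split_ifs
    exacts [Subring.pow_mem _ two_div_three_mem_oddDenomSubring n, Subring.zero_mem _]

theorem twoThirdsSum_mem_oddDenomSubring {b : ℕ → Bool} (hb : EventuallyPeriodic b) :
    twoThirdsSum b ∈ oddDenomSubring := by
  obtain ⟨N, p, hp, hper⟩ := hb
  set t : ℕ → Bool := fun n => b (n + N)
  have ht : (fun n => t (n + p)) = t :=
    funext fun n => by simp only [t, ← hper (n + N) (by omega), add_right_comm]
  have hself := twoThirdsSum_eq_sum_add t p
  rw [ht, div_pow] at hself
  have ht_mem : twoThirdsSum t ∈ oddDenomSubring := by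
    have hodd : Odd ((3 : ℤ) ^ p - 2 ^ p) :=
      (Odd.pow (show Odd (3 : ℤ) from ⟨1, rfl⟩)).sub_even (even_two.pow_of_ne_zero hp.ne')
    refine mem_oddDenomSubring_of_mul_mem hodd ?_
    have hmul : twoThirdsSum t * (((3 : ℤ) ^ p - 2 ^ p : ℤ) : ℝ) =
        3 ^ p * ∑ n ∈ range p, (if t n then (2 / 3 : ℝ) ^ n else 0) := by
      push_cast
      field_simp at hself
      linear_combination hself
    have h3 : (3 : ℝ) ∈ oddDenomSubring := ⟨3, 1, odd_one, by norm_num⟩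
    rw [hmul]
    exact Subring.mul_mem _ (Subring.pow_mem _ h3 p) (sum_twoThirds_ite_mem_oddDenomSubring t p)
  rw [twoThirdsSum_eq_sum_add b N]
  exact Subring.add_mem _ (sum_twoThirds_ite_mem_oddDenomSubring b N)
    (Subring.mul_mem _ (Subring.pow_mem _ two_div_three_mem_oddDenomSubring N) ht_mem)

theorem twoThirdsSum_ne_three_halves {b : ℕ → Bool} (hb : EventuallyPeriodic b) :
    twoThirdsSum b ≠ 3 / 2 := fun h =>
  three_div_two_not_mem_oddDenomSubring (h ▸ twoThirdsSum_mem_oddDenomSubring hb)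

noncomputable def greedyRemainder (x : ℝ) : ℕ → ℝ
  | 0 => x
  | n + 1 =>
    if (2 / 3 : ℝ) ^ n ≤ greedyRemainder x n then greedyRemainder x n - (2 / 3) ^ n
    else greedyRemainder x n

noncomputable def greedyDigits (x : ℝ) (n : ℕ) : Bool :=
  decide ((2 / 3 : ℝ) ^ n ≤ greedyRemainder x n)

-- `3 * (2/3)^n` is the sum of all the powers `(2/3)^k` still available, `k ≥ n`.
theorem greedyRemainder_mem_Icc {x : ℝ} (hx : x ∈ Set.Icc 0 3) (n : ℕ) :
    greedyRemainder x n ∈ Set.Icc 0 (3 * (2 / 3) ^ n) := by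
  induction n with
  | zero => simpa [greedyRemainder] using hx
  | succ n ih =>
    obtain ⟨h0, h3⟩ := ih
    simp only [greedyRemainder, pow_succ]
    split_ifs <;> constructor <;> linarith

theorem sum_greedyDigits (x : ℝ) (n : ℕ) :
    ∑ k ∈ range n, (if greedyDigits x k then (2 / 3 : ℝ) ^ k else 0) =
      x - greedyRemainder x n := by
  induction n with
  | zero => simp [greedyRemainder]
  | succ n ih =>
    rw [sum_range_succ, ih, greedyRemainder, greedyDigits]
    by_cases h : (2 / 3 : ℝ) ^ n ≤ greedyRemainder x n
    · simp only [h, decide_true, if_true]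
      ring
    · simp [h]

theorem twoThirdsSum_greedyDigits {x : ℝ} (hx : x ∈ Set.Icc 0 3) :
    twoThirdsSum (greedyDigits x) = x := by
  refine ((hasSum_iff_tendsto_nat_of_nonneg (fun n => by split_ifs <;> positivity) x).2
    ?_).tsum_eq
  simp only [sum_greedyDigits]
  have hrem : Filter.Tendsto (greedyRemainder x) Filter.atTop (nhds 0) := by
    refine squeeze_zero (fun n => (greedyRemainder_mem_Icc hx n).1)
      (fun n => (greedyRemainder_mem_Icc hx n).2) ?_
    simpa using (tendsto_pow_atTop_nhds_zero_of_lt_one (r := (2 / 3 : ℝ))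
      (by norm_num) (by norm_num)).const_mul 3
  simpa using tendsto_const_nhds.sub hrem

namespace MDSG

variable {P V A : Type} (G : MDSG P V A)

theorem length_histState_fst (σ : Profile V A) (v : V) (n : ℕ) :
    (G.histState σ v n).1.length = n := by
  induction n with
  | zero => rfl
  | succ n ih => simp [histState, ih]

theorem playV_add_of_tr_eq_self {σ : Profile V A} {v w : V} (hw : ∀ a, G.tr w a = w) {k : ℕ}
    (hk : G.playV σ v k = w) (i : ℕ) : G.playV σ v (i + k) = w := by
  induction i with
  | zero => simpa using hk
  | succ i ih =>
    rw [add_right_comm]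
    show G.tr (G.playV σ v (i + k)) _ = w
    rw [ih, hw]

theorem summable_reward (p : P) (σ : Profile V A) (v : V) :
    Summable fun i => G.rew p (G.playV σ v i) (G.playA σ v i) * G.disc ^ i := by
  have := G.fin_V
  have := G.fin_A
  obtain ⟨C, hC⟩ := (Set.finite_range fun x : V × A => |G.rew p x.1 x.2|).bddAbove
  refine Summable.of_norm_bounded
    ((summable_geometric_of_lt_one G.disc_pos.le G.disc_lt_one).mul_left C) fun i => ?_
  rw [norm_mul, norm_pow, Real.norm_of_nonneg G.disc_pos.le, Real.norm_eq_abs]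
  exact mul_le_mul_of_nonneg_right (hC ⟨(_, _), rfl⟩) (by have := G.disc_pos; positivity)

theorem reward_eq_sum_add_tsum (p : P) (σ : Profile V A) (v : V) (k : ℕ) :
    G.reward p σ v = ∑ i ∈ range k, G.rew p (G.playV σ v i) (G.playA σ v i) * G.disc ^ i +
      G.disc ^ k * ∑' j, G.rew p (G.playV σ v (j + k)) (G.playA σ v (j + k)) * G.disc ^ j := by
  rw [reward, ← (G.summable_reward p σ v).sum_add_tsum_nat_add k, ← tsum_mul_left]
  congr 1
  exact tsum_congr fun j => by ring

theorem ER_eq_reward_of_init_eq_ite [DecidableEq V] {v₀ : V}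
    (h : ∀ v, G.init v = if v = v₀ then 1 else 0) (p : P) (σ : Profile V A) :
    G.ER p σ = G.reward p σ v₀ := by
  simp [ER, h]

theorem diffOnly_ite [DecidableEq V] (σ τ : Profile V A) (w : V) :
    G.DiffOnly σ (fun h v => if v = w then τ h v else σ h v) (G.owner w) :=
  fun _ _ hv => if_neg <| by rintro rfl; exact hv rfl

theorem MemBound.eventuallyPeriodic_playA {G : MDSG P V A} {σ : Profile V A} {b : ℕ}
    (hσ : G.MemBound σ b) {v w : V} {k : ℕ} (hw : ∀ i, G.playV σ v (i + k) = w) :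
    EventuallyPeriodic fun i => G.playA σ v (i + k) := by
  obtain ⟨n, -, m₀, μ, u, hu⟩ := hσ
  let memory : ℕ → Fin n := fun i => (G.histState σ v i).1.foldl μ m₀
  let step : Fin n → Fin n := fun s => μ s (w, u s w)
  have hA : ∀ i, G.playA σ v (i + k) = u (memory (i + k)) w := fun i => by
    rw [← hw i]; exact hu _ _
  have hmemory : ∀ i, memory (i + k) = step^[i] (memory k) := by
    intro i
    induction i with
    | zero => simp
    | succ i ih =>
      rw [Function.iterate_succ_apply', ← ih, add_right_comm]
      show ((G.histState σ v (i + k)).1 ++ _).foldl μ m₀ = _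
      rw [List.foldl_append, List.foldl_cons, List.foldl_nil]
      show μ (memory (i + k)) (G.playV σ v (i + k), G.playA σ v (i + k)) = _
      rw [hA i, hw i]
  have hfun : (fun i => G.playA σ v (i + k)) = (fun s => u s w) ∘ fun i => step^[i] (memory k) :=
    funext fun i => by simp [hA, hmemory]
  rw [hfun]
  exact (eventuallyPeriodic_iterate step _).comp _

end MDSG

namespace MDSG.G5

variable {c : ℝ} {σ : Profile (Fin 5) Bool}

-- Player 1 moves on to player 2, and player 2 moves on to the leader's self-loops at vertex `2`.
def EntersLoop (σ : Profile (Fin 5) Bool) : Prop :=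
  σ [] 0 = true ∧ σ [(0, true)] 1 = true

noncomputable def loopActions (c : ℝ) (σ : Profile (Fin 5) Bool) (j : ℕ) : Bool :=
  (G5 c).playA σ 0 (j + 2)

theorem disc_eq : (G5 c).disc = 2 / 3 := rfl

theorem ER_eq_reward (p : Fin 3) (σ : Profile (Fin 5) Bool) :
    (G5 c).ER p σ = (G5 c).reward p σ 0 :=
  (G5 c).ER_eq_reward_of_init_eq_ite (fun _ => rfl) p σ

theorem rew_eq_zero_of_ne {p : Fin 3} {v : Fin 5} {a : Bool} (hv2 : v ≠ 2)
    (hv1 : v = 1 → a = false) : (G5 c).rew p v a = 0 := by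
  by_cases h : v = 1
  · simp [G5, h, hv1 h]
  · simp [G5, h, hv2]

theorem playV_add_two (h : EntersLoop σ) (i : ℕ) : (G5 c).playV σ 0 (i + 2) = 2 :=
  (G5 c).playV_add_of_tr_eq_self (fun _ => rfl) (by simp [playV, histState, G5, h.1, h.2]) i

theorem ER_eq_zero_of_not_entersLoop (h : ¬ EntersLoop σ) (p : Fin 3) : (G5 c).ER p σ = 0 := by
  suffices hplay : ∀ i, (G5 c).playV σ 0 i ≠ 2 ∧
      ((G5 c).playV σ 0 i = 1 → (G5 c).playA σ 0 i = false) by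
    simp [ER_eq_reward, reward, rew_eq_zero_of_ne (hplay _).1 (hplay _).2]
  cases h0 : σ [] 0
  · have h3 := (G5 c).playV_add_of_tr_eq_self (σ := σ) (v := 0) (w := 3) (k := 1)
      (fun _ => rfl) (by simp [playV, histState, G5, h0])
    rintro (_ | i)
    · simp [playV, histState]
    · simp [h3 i]
  · have h1 : σ [(0, true)] 1 = false := by simpa [EntersLoop, h0] using h
    have h4 := (G5 c).playV_add_of_tr_eq_self (σ := σ) (v := 0) (w := 4) (k := 2)
      (fun _ => rfl) (by simp [playV, histState, G5, h0, h1])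
    rintro (_ | _ | i)
    · simp [playV, histState]
    · simp [playV, playA, histState, G5, h0, h1]
    · simp [h4 i]

theorem ER_eq_of_entersLoop (h : EntersLoop σ) (p : Fin 3) :
    (G5 c).ER p σ = (G5 c).rew p 1 true * (2 / 3) +
      (2 / 3) ^ 2 * ∑' j, (G5 c).rew p 2 (loopActions c σ j) * (2 / 3) ^ j := by
  have h0 : (G5 c).rew p ((G5 c).playV σ 0 0) ((G5 c).playA σ 0 0) = 0 :=
    rew_eq_zero_of_ne (v := 0) (by decide) (by simp)
  have h1 : (G5 c).playV σ 0 1 = 1 ∧ (G5 c).playA σ 0 1 = true := by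
    simp [playV, playA, histState, G5, h.1, h.2]
  rw [ER_eq_reward, reward_eq_sum_add_tsum _ p σ 0 2]
  simp only [sum_range_succ, sum_range_zero, h0, h1.1, h1.2, playV_add_two h, loopActions,
    zero_mul, zero_add, pow_one, disc_eq]

theorem ER_two_of_entersLoop (h : EntersLoop σ) : (G5 c).ER 2 σ = 2 * c := by
  have hterm : ∀ j, (G5 c).rew 2 2 (loopActions c σ j) * (2 / 3) ^ j = c * (2 / 3) ^ j :=
    fun j => by simp [G5]
  rw [ER_eq_of_entersLoop h, tsum_congr hterm, tsum_mul_left,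
    tsum_geometric_of_lt_one (by norm_num) (by norm_num)]
  simp [G5]
  ring

theorem ER_zero_of_entersLoop (h : EntersLoop σ) :
    (G5 c).ER 0 σ = c * (4 / 9 * twoThirdsSum (loopActions c σ) - 2 / 3) := by
  have hterm : ∀ j, (G5 c).rew 0 2 (loopActions c σ j) * (2 / 3) ^ j =
      c * if loopActions c σ j then (2 / 3) ^ j else 0 :=
    fun j => by cases loopActions c σ j <;> simp [G5]
  rw [ER_eq_of_entersLoop h, tsum_congr hterm, tsum_mul_left, ← twoThirdsSum]
  simp [G5]
  ring

theorem ER_one_of_entersLoop (h : EntersLoop σ) :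
    (G5 c).ER 1 σ = c * (2 / 3 - 4 / 9 * twoThirdsSum (loopActions c σ)) := by
  have hterm : ∀ j, (G5 c).rew 1 2 (loopActions c σ j) * (2 / 3) ^ j =
      c * if !loopActions c σ j then (2 / 3) ^ j else 0 :=
    fun j => by cases loopActions c σ j <;> simp [G5]
  have hnot := twoThirdsSum_add_twoThirdsSum_not (loopActions c σ)
  rw [ER_eq_of_entersLoop h, tsum_congr hterm, tsum_mul_left, ← twoThirdsSum,
    eq_sub_of_add_eq' hnot]
  simp [G5]
  ring

theorem ER_two_le (hc : 0 ≤ c) (σ : Profile (Fin 5) Bool) : (G5 c).ER 2 σ ≤ 2 * c := by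
  by_cases h : EntersLoop σ
  · exact (ER_two_of_entersLoop h).le
  · rw [ER_eq_zero_of_not_entersLoop h]
    positivity

-- Each follower can secure `0` by leaving for its sink, which bounds the loop sum from both sides.
theorem twoThirdsSum_loopActions_of_isNash (hc : 0 < c) (hN : (G5 c).IsNash σ)
    (h : EntersLoop σ) : twoThirdsSum (loopActions c σ) = 3 / 2 := by
  have h0 := hN 0 _ ((G5 c).diffOnly_ite σ (fun _ _ => false) 0)
  have h1 := hN 1 _ ((G5 c).diffOnly_ite σ (fun _ _ => false) 1)
  rw [ER_eq_zero_of_not_entersLoop (by simp [EntersLoop]), ER_zero_of_entersLoop h] at h0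
  rw [ER_eq_zero_of_not_entersLoop (by simp [EntersLoop]), ER_one_of_entersLoop h] at h1
  have := (mul_nonneg_iff_of_pos_left hc).1 h0
  have := (mul_nonneg_iff_of_pos_left hc).1 h1
  linarith

theorem ER_eq_zero_of_twoThirdsSum_eq (h : EntersLoop σ)
    (hx : twoThirdsSum (loopActions c σ) = 3 / 2) {p : Fin 3} (hp : p ≠ 2) :
    (G5 c).ER p σ = 0 := by
  match p, hp with
  | 0, _ => rw [ER_zero_of_entersLoop h, hx]; ring
  | 1, _ => rw [ER_one_of_entersLoop h, hx]; ring
  | 2, hp => exact absurd rfl hp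

theorem ER_two_eq_zero_of_memBound (hc : 0 < c) {b : ℕ} (hσ : (G5 c).MemBound σ b)
    (hN : (G5 c).IsNash σ) : (G5 c).ER 2 σ = 0 := by
  by_cases h : EntersLoop σ
  · exact absurd (twoThirdsSum_loopActions_of_isNash hc hN h)
      (twoThirdsSum_ne_three_halves (hσ.eventuallyPeriodic_playA (playV_add_two h)))
  · exact ER_eq_zero_of_not_entersLoop h 2

def loopProfile (b : ℕ → Bool) : Profile (Fin 5) Bool :=
  fun h v => if v = 2 then b (h.length - 2) else true

theorem entersLoop_loopProfile (b : ℕ → Bool) : EntersLoop (loopProfile b) := by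
  simp [EntersLoop, loopProfile]

-- The leader's moves depend only on the length of the history, which no follower can alter.
theorem loopActions_of_diffOnly {b : ℕ → Bool} {σ' : Profile (Fin 5) Bool} {p : Fin 3}
    (hp : p ≠ 2) (hd : (G5 c).DiffOnly (loopProfile b) σ' p) (h : EntersLoop σ') :
    loopActions c σ' = b := by
  funext j
  show σ' _ ((G5 c).playV σ' 0 (j + 2)) = b j
  rw [playV_add_two h, hd _ 2 (Ne.symm hp)]
  simp [loopProfile, length_histState_fst]

theorem isNash_loopProfile (hc : 0 ≤ c) {b : ℕ → Bool} (hb : twoThirdsSum b = 3 / 2) :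
    (G5 c).IsNash (loopProfile b) := by
  intro p σ' hd
  by_cases hp : p = 2
  · subst hp
    rw [ER_two_of_entersLoop (entersLoop_loopProfile b)]
    exact ER_two_le hc σ'
  · have hfollower : ∀ τ, (G5 c).DiffOnly (loopProfile b) τ p → (G5 c).ER p τ = 0 := by
      intro τ hτ
      by_cases h : EntersLoop τ
      · exact ER_eq_zero_of_twoThirdsSum_eq h (by rw [loopActions_of_diffOnly hp hτ h, hb]) hp
      · exact ER_eq_zero_of_not_entersLoop h p
    rw [hfollower σ' hd, hfollower _ fun _ _ _ => rfl]

end MDSG.G5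

open MDSG in
/-- In the game `G₅` (leader = player `2`): there is a Nash equilibrium whose
leader expected reward is `2`, and `2` is the maximum of the leader's expected
reward over all Nash equilibria; however, for every memory bound `b`, every
Nash equilibrium with memory bound `b` gives the leader expected reward `0`.
Moreover, for every rational `c > 0`, in the scaled game `c·G₅` there is a
Nash equilibrium with leader expected reward `2c` while every bounded-memory
Nash equilibrium gives the leader expected reward `0`; hence the gap between
the leader's optimal Nash payoff and her optimal payoff over bounded-memory
Nash equilibria can be made arbitrarily large. -/
theorem optimal_Nash_needs_infinite_memory :
    (∃ σ : Profile (Fin 5) Bool, (G5 1).IsNash σ ∧ (G5 1).ER 2 σ = 2) ∧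
    (∀ σ : Profile (Fin 5) Bool, (G5 1).IsNash σ → (G5 1).ER 2 σ ≤ 2) ∧
    (∀ (b : ℕ) (σ : Profile (Fin 5) Bool),
      (G5 1).MemBound σ b → (G5 1).IsNash σ → (G5 1).ER 2 σ = 0) ∧
    (∀ c : ℚ, 0 < c →
      (∃ σ : Profile (Fin 5) Bool,
        (G5 (c : ℝ)).IsNash σ ∧ (G5 (c : ℝ)).ER 2 σ = 2 * (c : ℝ)) ∧
      (∀ (b : ℕ) (σ : Profile (Fin 5) Bool),
        (G5 (c : ℝ)).MemBound σ b → (G5 (c : ℝ)).IsNash σ →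
        (G5 (c : ℝ)).ER 2 σ = 0)) := by
  obtain ⟨b, hb⟩ : ∃ b, twoThirdsSum b = 3 / 2 :=
    ⟨_, twoThirdsSum_greedyDigits (by norm_num : (3 / 2 : ℝ) ∈ Set.Icc 0 3)⟩
  have hNash (c : ℝ) (hc : 0 ≤ c) : ∃ σ, (G5 c).IsNash σ ∧ (G5 c).ER 2 σ = 2 * c :=
    ⟨_, G5.isNash_loopProfile hc hb, G5.ER_two_of_entersLoop (G5.entersLoop_loopProfile b)⟩
  refine ⟨by simpa using hNash 1 zero_le_one,
    fun σ _ => by simpa using G5.ER_two_le zero_le_one σ,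
    fun _ _ hσ hN => G5.ER_two_eq_zero_of_memBound one_pos hσ hN, fun c hc => ?_⟩
  have hc' : (0 : ℝ) < c := by exact_mod_cast hc
  exact ⟨hNash c hc'.le, fun _ _ hσ hN => G5.ER_two_eq_zero_of_memBound hc' hσ hN⟩
end

section
/- Let an MDSG with a single start vertex v₀ (Δ(v₀) = 1) be given, and let π = v₀,a₀,v₁,a₁,… be a play such that for every j ∈ ℕ and every player p (respectively, every player p ≠ l), the upper value satisfies r̄_p(v_j) ≤ ∑_{i=0}^∞ t_p(v_{j+i},a_{j+i})·λ^i. Then there exists a Nash equilibrium (respectively, a leader strategy profile for leader l) σ whose outcome play is π, i.e. π_σ(v₀) = π. -/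
open scoped BigOperators

/-!
The profile follows `π` until some player `p` first leaves it, at position `j`; from then on all
other players play an optimal positional strategy of the zero-sum game against `p`. The value of
that game (the fixed point of its contracting Shapley operator) is secured by positional
strategies on both sides, so it is at most the upper value `r̄_p`. Hence the deviator earns at most
`r̄_p(v j)` from position `j` on, which by hypothesis is at most what `π` pays from there.
-/

section DiscountedSum

variable {c d x : ℕ → ℝ} {r : ℝ}

theorem summable_mul_pow_of_abs_le {M : ℝ} (hr₀ : 0 ≤ r) (hr₁ : r < 1) (hc : ∀ i, |c i| ≤ M) :
    Summable fun i => c i * r ^ i :=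
  .of_norm_bounded ((summable_geometric_of_lt_one hr₀ hr₁).mul_left M) fun i => by
    rw [norm_mul, norm_pow, Real.norm_eq_abs, Real.norm_eq_abs, abs_of_nonneg hr₀]
    exact mul_le_mul_of_nonneg_right (hc i) (pow_nonneg hr₀ i)

theorem tsum_mul_pow_le_of_abs_le {M : ℝ} (hr₀ : 0 ≤ r) (hr₁ : r < 1) (hc : ∀ i, |c i| ≤ M) :
    ∑' i, c i * r ^ i ≤ M * (1 - r)⁻¹ := by
  have hgeom := summable_geometric_of_lt_one hr₀ hr₁
  rw [← tsum_geometric_of_lt_one hr₀ hr₁, ← hgeom.tsum_mul_left]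
  refine (summable_mul_pow_of_abs_le hr₀ hr₁ hc).tsum_le_tsum (fun i => ?_) (hgeom.mul_left M)
  exact mul_le_mul_of_nonneg_right (abs_le.mp (hc i)).2 (pow_nonneg hr₀ i)

theorem tsum_mul_pow_le_of_step (hr₀ : 0 ≤ r) (hr₁ : r < 1)
    (hc : Summable fun i => c i * r ^ i) (hx : BddBelow (Set.range x))
    (hstep : ∀ n, c n + r * x (n + 1) ≤ x n) :
    ∑' i, c i * r ^ i ≤ x 0 := by
  obtain ⟨K, hK⟩ := hx
  have hpartial : ∀ n, ∑ i ∈ Finset.range n, c i * r ^ i + r ^ n * x n ≤ x 0 := by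
    intro n
    induction n with
    | zero => simp
    | succ n ih =>
      have := mul_le_mul_of_nonneg_left (hstep n) (pow_nonneg hr₀ n)
      have hpow : r ^ (n + 1) * x (n + 1) = r ^ n * (r * x (n + 1)) := by ring
      rw [Finset.sum_range_succ]
      linarith
  have hlim : Filter.Tendsto (fun n => x 0 - r ^ n * K) Filter.atTop (nhds (x 0)) := by
    simpa using ((tendsto_pow_atTop_nhds_zero_of_lt_one hr₀ hr₁).mul_const K).const_sub (x 0)
  refine le_of_tendsto_of_tendsto' hc.tendsto_sum_tsum_nat hlim fun n => ?_
  have := mul_le_mul_of_nonneg_left (hK ⟨n, rfl⟩ : K ≤ x n) (pow_nonneg hr₀ n)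
  linarith [hpartial n]

theorem le_tsum_mul_pow_of_step (hr₀ : 0 ≤ r) (hr₁ : r < 1)
    (hc : Summable fun i => c i * r ^ i) (hx : BddAbove (Set.range x))
    (hstep : ∀ n, x n ≤ c n + r * x (n + 1)) :
    x 0 ≤ ∑' i, c i * r ^ i := by
  obtain ⟨M, hM⟩ := hx
  have := tsum_mul_pow_le_of_step (c := fun i => -c i) (x := fun i => -x i) hr₀ hr₁
    (by simpa only [neg_mul] using hc.neg)
    ⟨-M, by rintro _ ⟨n, rfl⟩; linarith [hM ⟨n, rfl⟩]⟩ (fun n => by linarith [hstep n])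
  simp only [neg_mul, tsum_neg] at this
  linarith

theorem tsum_mul_pow_le_of_tail_le (hr₀ : 0 ≤ r)
    (hc : Summable fun i => c i * r ^ i) (hd : Summable fun i => d i * r ^ i) (j : ℕ)
    (hpre : ∀ i < j, c i = d i)
    (htail : ∑' i, c (j + i) * r ^ i ≤ ∑' i, d (j + i) * r ^ i) :
    ∑' i, c i * r ^ i ≤ ∑' i, d i * r ^ i := by
  have hsplit : ∀ e : ℕ → ℝ, (Summable fun i => e i * r ^ i) →
      ∑' i, e i * r ^ i =
        ∑ i ∈ Finset.range j, e i * r ^ i + r ^ j * ∑' i, e (j + i) * r ^ i := by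
    intro e he
    rw [← he.sum_add_tsum_nat_add j, ← tsum_mul_left]
    congr 1
    exact tsum_congr fun i => by rw [add_comm i j, pow_add]; ring
  rw [hsplit c hc, hsplit d hd,
    Finset.sum_congr rfl fun i hi => by rw [hpre i (Finset.mem_range.mp hi)]]
  exact add_le_add_right (mul_le_mul_of_nonneg_left htail (pow_nonneg hr₀ j)) _

end DiscountedSum

namespace MDSG

variable {P V A : Type} (G : MDSG P V A)

section Play

theorem playV_succ (σ : Profile V A) (w : V) (n : ℕ) :
    G.playV σ w (n + 1) = G.tr (G.playV σ w n) (G.playA σ w n) := rfl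

theorem histState_fst (σ : Profile V A) (w : V) (n : ℕ) :
    (G.histState σ w n).1 = (List.range n).map fun i => (G.playV σ w i, G.playA σ w i) := by
  induction n with
  | zero => rfl
  | succ n ih => rw [List.range_succ, List.map_append, ← ih]; rfl

theorem playA_eq (σ : Profile V A) (w : V) (n : ℕ) :
    G.playA σ w n =
      σ ((List.range n).map fun i => (G.playV σ w i, G.playA σ w i)) (G.playV σ w n) := by
  rw [← histState_fst]; rfl

variable {G} {σ : Profile V A} {v₀ : V} {v : ℕ → V} {a : ℕ → A}

theorem playV_eq_of_playA_eq (hstart : v 0 = v₀) (hstep : ∀ i, v (i + 1) = G.tr (v i) (a i))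
    {n : ℕ} (hn : ∀ m < n, G.playA σ v₀ m = a m) : G.playV σ v₀ n = v n := by
  induction n with
  | zero => exact hstart.symm
  | succ n ih =>
    rw [playV_succ, ih fun m hm => hn m (by omega), hn n n.lt_succ_self, hstep]

theorem histState_fst_eq_of_playA_eq (hstart : v 0 = v₀)
    (hstep : ∀ i, v (i + 1) = G.tr (v i) (a i)) {n : ℕ} (hn : ∀ m < n, G.playA σ v₀ m = a m) :
    (List.range n).map (fun i => (G.playV σ v₀ i, G.playA σ v₀ i)) =
      (List.range n).map fun i => (v i, a i) := by
  refine List.map_congr_left fun m hm => ?_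
  have hmn := List.mem_range.mp hm
  rw [playV_eq_of_playA_eq hstart hstep fun k hk => hn k (by omega), hn m hmn]

end Play

theorem exists_abs_rew_le [Finite V] [Finite A] (p : P) : ∃ M, ∀ w b, |G.rew p w b| ≤ M := by
  obtain ⟨M, hM⟩ := Finite.bddAbove_range fun x : V × A => |G.rew p x.1 x.2|
  exact ⟨M, fun w b => hM ⟨(w, b), rfl⟩⟩

theorem summable_rew_mul_pow [Finite V] [Finite A] (p : P) (w : ℕ → V) (b : ℕ → A) :
    Summable fun i => G.rew p (w i) (b i) * G.disc ^ i :=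
  have ⟨_, hM⟩ := G.exists_abs_rew_le p
  summable_mul_pow_of_abs_le G.disc_pos.le G.disc_lt_one fun i => hM (w i) (b i)

theorem bddAbove_range_reward [Finite V] [Finite A] (p : P) (w : V) :
    BddAbove (Set.range fun σ => G.reward p σ w) := by
  obtain ⟨M, hM⟩ := G.exists_abs_rew_le p
  refine ⟨M * (1 - G.disc)⁻¹, ?_⟩
  rintro _ ⟨σ, rfl⟩
  exact tsum_mul_pow_le_of_abs_le G.disc_pos.le G.disc_lt_one fun i => hM _ _

theorem ER_eq_reward [Finite V] {v₀ : V} (hv₀ : G.init v₀ = 1) (p : P) (σ : Profile V A) :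
    G.ER p σ = G.reward p σ v₀ := by
  classical
  have hinit : ∀ u ≠ v₀, G.init u = 0 := by
    intro u hu
    have hsum : HasSum G.init 1 := G.init_sum ▸ (Summable.of_finite).hasSum
    have := sum_le_hasSum {v₀, u} (fun i _ => G.init_nonneg i) hsum
    rw [Finset.sum_pair hu.symm, hv₀] at this
    exact le_antisymm (by linarith) (G.init_nonneg u)
  rw [ER, tsum_eq_single v₀ fun u hu => by rw [hinit u hu, zero_mul], hv₀, one_mul]

section ZeroSumValue

def lookahead (p : P) (f : V → ℝ) (w : V) (b : A) : ℝ :=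
  G.rew p w b + G.disc * f (G.tr w b)

open Classical in
/-- The Shapley operator of the zero-sum game in which `p` plays against the coalition of all
other players. -/
noncomputable def bellman (p : P) (f : V → ℝ) (w : V) : ℝ :=
  if G.owner w = p then ⨆ b, G.lookahead p f w b else ⨅ b, G.lookahead p f w b

variable [Finite A] [Nonempty A]

theorem bellman_le_add (p : P) {f g : V → ℝ} {c : ℝ} (w : V)
    (h : ∀ b, G.lookahead p f w b ≤ G.lookahead p g w b + c) :
    G.bellman p f w ≤ G.bellman p g w + c := by
  unfold bellman
  split_ifs
  · exact ciSup_le fun b => by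
      linarith [h b, le_ciSup (Finite.bddAbove_range (G.lookahead p g w)) b]
  · have : (⨅ b, G.lookahead p f w b) - c ≤ ⨅ b, G.lookahead p g w b :=
      le_ciInf fun b => by linarith [h b, ciInf_le (Finite.bddBelow_range (G.lookahead p f w)) b]
    linarith

theorem bellman_contracting [Fintype V] (p : P) :
    ContractingWith ⟨G.disc, G.disc_pos.le⟩ (G.bellman p) := by
  refine ⟨G.disc_lt_one, LipschitzWith.of_dist_le_mul fun f g => ?_⟩
  have hlook : ∀ f g : V → ℝ, ∀ w b,
      G.lookahead p f w b ≤ G.lookahead p g w b + G.disc * dist f g := by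
    intro f g w b
    have := (abs_le.mp ((Real.dist_eq _ _).symm.trans_le
      (dist_le_pi_dist f g (G.tr w b)))).2
    simp only [lookahead]
    nlinarith [G.disc_pos]
  refine (dist_pi_le_iff (mul_nonneg G.disc_pos.le dist_nonneg)).mpr fun w => ?_
  rw [Real.dist_eq, abs_sub_le_iff]
  constructor
  · linarith [G.bellman_le_add p w (hlook f g w)]
  · linarith [G.bellman_le_add p w (dist_comm f g ▸ hlook g f w)]

variable [Fintype V]

noncomputable def zeroSumValue (p : P) : V → ℝ :=
  (G.bellman_contracting p).fixedPoint (G.bellman p)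

theorem bellman_zeroSumValue (p : P) : G.bellman p (G.zeroSumValue p) = G.zeroSumValue p :=
  (G.bellman_contracting p).fixedPoint_isFixedPt

theorem lookahead_le_zeroSumValue {p : P} {w : V} (hw : G.owner w = p) (b : A) :
    G.lookahead p (G.zeroSumValue p) w b ≤ G.zeroSumValue p w := by
  conv_rhs => rw [← bellman_zeroSumValue]
  rw [bellman, if_pos hw]
  exact le_ciSup (Finite.bddAbove_range _) b

theorem zeroSumValue_le_lookahead {p : P} {w : V} (hw : G.owner w ≠ p) (b : A) :
    G.zeroSumValue p w ≤ G.lookahead p (G.zeroSumValue p) w b := by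
  conv_lhs => rw [← bellman_zeroSumValue]
  rw [bellman, if_neg hw]
  exact ciInf_le (Finite.bddBelow_range _) b

theorem exists_lookahead_eq_zeroSumValue (p : P) (w : V) :
    ∃ b, G.lookahead p (G.zeroSumValue p) w b = G.zeroSumValue p w := by
  conv in G.zeroSumValue p w => rw [← bellman_zeroSumValue]
  rw [bellman]
  split_ifs
  exacts [exists_eq_ciSup_of_finite, exists_eq_ciInf_of_finite]

/-- An optimal positional action in the zero-sum game against `p`: a best response for `p` at
its own vertices, and a punishment of `p` at the vertices of the other players. -/
noncomputable def optimalAction (p : P) (w : V) : A :=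
  (G.exists_lookahead_eq_zeroSumValue p w).choose

theorem lookahead_optimalAction (p : P) (w : V) :
    G.lookahead p (G.zeroSumValue p) w (G.optimalAction p w) = G.zeroSumValue p w :=
  (G.exists_lookahead_eq_zeroSumValue p w).choose_spec

variable {G}

theorem tsum_le_zeroSumValue {p : P} {w : ℕ → V} {b : ℕ → A}
    (hw : ∀ n, w (n + 1) = G.tr (w n) (b n))
    (hb : ∀ n, G.owner (w n) ≠ p → b n = G.optimalAction p (w n)) :
    ∑' i, G.rew p (w i) (b i) * G.disc ^ i ≤ G.zeroSumValue p (w 0) := by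
  refine tsum_mul_pow_le_of_step (x := fun n => G.zeroSumValue p (w n)) G.disc_pos.le
    G.disc_lt_one (G.summable_rew_mul_pow p w b)
    ((Finite.bddBelow_range _).mono (Set.range_comp_subset_range w _)) fun n => ?_
  rw [hw n]
  by_cases hown : G.owner (w n) = p
  · exact G.lookahead_le_zeroSumValue hown (b n)
  · rw [hb n hown]
    exact (G.lookahead_optimalAction p (w n)).le

theorem zeroSumValue_le_tsum {p : P} {w : ℕ → V} {b : ℕ → A}
    (hw : ∀ n, w (n + 1) = G.tr (w n) (b n))
    (hb : ∀ n, G.owner (w n) = p → b n = G.optimalAction p (w n)) :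
    G.zeroSumValue p (w 0) ≤ ∑' i, G.rew p (w i) (b i) * G.disc ^ i := by
  refine le_tsum_mul_pow_of_step (x := fun n => G.zeroSumValue p (w n)) G.disc_pos.le
    G.disc_lt_one (G.summable_rew_mul_pow p w b)
    ((Finite.bddAbove_range _).mono (Set.range_comp_subset_range w _)) fun n => ?_
  rw [hw n]
  by_cases hown : G.owner (w n) = p
  · rw [hb n hown]
    exact (G.lookahead_optimalAction p (w n)).ge
  · exact G.zeroSumValue_le_lookahead hown (b n)

/-- Against any joint strategy of the other players, `p` secures `zeroSumValue` by playing
`optimalAction` at its own vertices. -/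
theorem zeroSumValue_le_upperValue (p : P) (w : V) :
    G.zeroSumValue p w ≤ G.upperValue p w := by
  refine le_ciInf fun τo => le_ciSup_of_le ((G.bddAbove_range_reward p w).mono ?_)
    (fun _ => G.optimalAction p) ?_
  · rintro _ ⟨τp, rfl⟩
    exact ⟨_, rfl⟩
  refine zeroSumValue_le_tsum (w := G.playV _ w) (fun n => G.playV_succ _ w n) fun n hn => ?_
  rw [playA_eq, combine, if_pos hn]

end ZeroSumValue

section RewardPunish

def LeavesAt (v : ℕ → V) (a : ℕ → A) (h : List (V × A)) (i : ℕ) : Prop :=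
  i < h.length ∧ h[i]? ≠ some (v i, a i)

open Classical in
noncomputable def rewardPunish (punish : P → V → A) (v : ℕ → V) (a : ℕ → A) : Profile V A :=
  fun h u =>
    if hdev : ∃ i, LeavesAt v a h i then punish (G.owner (v (Nat.find hdev))) u
    else a h.length

variable {G} {punish : P → V → A} {v₀ : V} {v : ℕ → V} {a : ℕ → A}

theorem rewardPunish_map_range (n : ℕ) (u : V) :
    G.rewardPunish punish v a ((List.range n).map fun i => (v i, a i)) u = a n := by
  have hnot : ¬ ∃ i, LeavesAt v a ((List.range n).map fun i => (v i, a i)) i := by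
    rintro ⟨i, hi, hne⟩
    rw [List.length_map, List.length_range] at hi
    exact hne (by rw [List.getElem?_map, List.getElem?_range hi]; rfl)
  rw [rewardPunish, dif_neg hnot, List.length_map, List.length_range]

theorem rewardPunish_of_leavesAt {h : List (V × A)} {j : ℕ} (hj : LeavesAt v a h j)
    (hpre : ∀ i < j, ¬ LeavesAt v a h i) (u : V) :
    G.rewardPunish punish v a h u = punish (G.owner (v j)) u := by
  classical
  have hdev : ∃ i, LeavesAt v a h i := ⟨j, hj⟩
  have hfind : Nat.find hdev = j := (Nat.find_eq_iff hdev).mpr ⟨hj, hpre⟩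
  rw [rewardPunish, dif_pos hdev, hfind]

theorem playA_rewardPunish (hstart : v 0 = v₀) (hstep : ∀ i, v (i + 1) = G.tr (v i) (a i))
    (n : ℕ) : G.playA (G.rewardPunish punish v a) v₀ n = a n := by
  induction n using Nat.strong_induction_on with
  | _ n ih => rw [playA_eq, histState_fst_eq_of_playA_eq hstart hstep ih, rewardPunish_map_range]

theorem playV_rewardPunish (hstart : v 0 = v₀) (hstep : ∀ i, v (i + 1) = G.tr (v i) (a i))
    (n : ℕ) : G.playV (G.rewardPunish punish v a) v₀ n = v n :=
  playV_eq_of_playA_eq hstart hstep fun m _ => playA_rewardPunish hstart hstep m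

theorem playA_eq_punish_of_deviation {p : P} {σ' : Profile V A}
    (hσ' : G.DiffOnly (G.rewardPunish punish v a) σ' p)
    (hstart : v 0 = v₀) (hstep : ∀ i, v (i + 1) = G.tr (v i) (a i)) {j : ℕ}
    (hj : G.playA σ' v₀ j ≠ a j) (hpre : ∀ m < j, G.playA σ' v₀ m = a m) :
    ∀ n, G.owner (G.playV σ' v₀ (j + n)) ≠ p →
      G.playA σ' v₀ (j + n) = punish p (G.playV σ' v₀ (j + n)) := by
  have hvj : G.playV σ' v₀ j = v j := playV_eq_of_playA_eq hstart hstep hpre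
  -- on the prescribed history, the players other than `p` play `a j`
  have hown : G.owner (v j) = p := by
    by_contra hown
    rw [playA_eq, histState_fst_eq_of_playA_eq hstart hstep hpre, hvj, hσ' _ _ hown,
      rewardPunish_map_range] at hj
    exact hj rfl
  intro n hn
  obtain _ | n := n
  · exact absurd (hvj ▸ hown) hn
  have hget : ∀ i < j + (n + 1),
      ((List.range (j + (n + 1))).map fun i => (G.playV σ' v₀ i, G.playA σ' v₀ i))[i]? =
        some (G.playV σ' v₀ i, G.playA σ' v₀ i) := fun i hi => by
    rw [List.getElem?_map, List.getElem?_range hi]; rfl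
  rw [playA_eq, hσ' _ _ hn, rewardPunish_of_leavesAt (j := j), hown]
  · refine ⟨by simp, ?_⟩
    rw [hget j (by omega), hvj]
    simpa using hj
  · rintro i hi ⟨-, hne⟩
    rw [hget i (by omega), hpre i hi, playV_eq_of_playA_eq hstart hstep fun m hm => hpre m
      (by omega)] at hne
    exact hne rfl

end RewardPunish

section

variable {G} [Fintype V] [Finite A] [Nonempty A]

theorem reward_le_reward_rewardPunish {v₀ : V} {v : ℕ → V} {a : ℕ → A} (hstart : v 0 = v₀)
    (hstep : ∀ i, v (i + 1) = G.tr (v i) (a i)) {p : P}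
    (hp : ∀ j, G.upperValue p (v j) ≤ ∑' i, G.rew p (v (j + i)) (a (j + i)) * G.disc ^ i)
    {σ' : Profile V A} (hσ' : G.DiffOnly (G.rewardPunish G.optimalAction v a) σ' p) :
    G.reward p σ' v₀ ≤ G.reward p (G.rewardPunish G.optimalAction v a) v₀ := by
  classical
  have hσ : G.reward p (G.rewardPunish G.optimalAction v a) v₀ =
      ∑' i, G.rew p (v i) (a i) * G.disc ^ i :=
    tsum_congr fun i => by rw [playV_rewardPunish hstart hstep, playA_rewardPunish hstart hstep]
  rw [hσ, reward]
  by_cases hdev : ∃ n, G.playA σ' v₀ n ≠ a n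
  · set j := Nat.find hdev
    have hpre : ∀ m < j, G.playA σ' v₀ m = a m := fun m hm => not_not.mp (Nat.find_min hdev hm)
    have hvj : G.playV σ' v₀ j = v j := playV_eq_of_playA_eq hstart hstep hpre
    have hpunish := playA_eq_punish_of_deviation hσ' hstart hstep (Nat.find_spec hdev) hpre
    refine tsum_mul_pow_le_of_tail_le G.disc_pos.le (G.summable_rew_mul_pow p _ _)
      (G.summable_rew_mul_pow p v a) j (fun i hi => ?_) ?_
    · rw [playV_eq_of_playA_eq hstart hstep fun m hm => hpre m (by omega), hpre i hi]
    calc ∑' i, G.rew p (G.playV σ' v₀ (j + i)) (G.playA σ' v₀ (j + i)) * G.disc ^ i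
        ≤ G.zeroSumValue p (G.playV σ' v₀ (j + 0)) :=
          tsum_le_zeroSumValue (fun n => G.playV_succ σ' v₀ (j + n)) hpunish
      _ ≤ G.upperValue p (v j) := hvj ▸ zeroSumValue_le_upperValue p _
      _ ≤ _ := hp j
  · push Not at hdev
    exact (tsum_congr fun i => by
      rw [playV_eq_of_playA_eq hstart hstep fun m _ => hdev m, hdev i]).le

end

end MDSG

open MDSG in
/-- Let an MDSG with a single start vertex `v₀` (i.e. `init v₀ = 1`) be given,
and let `π = v 0, a 0, v 1, a 1, …` be a play from `v₀`.  If for every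
position `j` and every player `p` (respectively, every player `p ≠ l`), the
upper value of `p` at `v j` is at most the discounted reward of `p` along the
tail of `π` from position `j` on, then there is a Nash equilibrium
(respectively, a leader strategy profile for leader `l`) whose outcome play
from `v₀` is exactly `π`. -/
theorem sufficient_condition_for_outcome_plays {P V A : Type} (G : MDSG P V A)
    (v₀ : V) (hv₀ : G.init v₀ = 1)
    (v : ℕ → V) (a : ℕ → A) (hstart : v 0 = v₀)
    (hstep : ∀ i : ℕ, v (i + 1) = G.tr (v i) (a i)) :
    ((∀ (j : ℕ) (p : P),
        G.upperValue p (v j) ≤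
          ∑' i : ℕ, G.rew p (v (j + i)) (a (j + i)) * G.disc ^ i) →
      ∃ σ : Profile V A, G.IsNash σ ∧
        ∀ n : ℕ, G.playV σ v₀ n = v n ∧ G.playA σ v₀ n = a n) ∧
    (∀ l : P,
      (∀ (j : ℕ) (p : P), p ≠ l →
        G.upperValue p (v j) ≤
          ∑' i : ℕ, G.rew p (v (j + i)) (a (j + i)) * G.disc ^ i) →
      ∃ σ : Profile V A, G.IsLeaderSP l σ ∧
        ∀ n : ℕ, G.playV σ v₀ n = v n ∧ G.playA σ v₀ n = a n) := by
  have := G.fin_A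
  have := G.nonempty_A
  have := G.fin_V
  let := Fintype.ofFinite V
  let σ := G.rewardPunish G.optimalAction v a
  have houtcome : ∀ n, G.playV σ v₀ n = v n ∧ G.playA σ v₀ n = a n := fun n =>
    ⟨playV_rewardPunish hstart hstep n, playA_rewardPunish hstart hstep n⟩
  have hstable : ∀ p, (∀ j, G.upperValue p (v j) ≤
      ∑' i, G.rew p (v (j + i)) (a (j + i)) * G.disc ^ i) →
      ∀ σ', G.DiffOnly σ σ' p → G.ER p σ' ≤ G.ER p σ := fun p hp σ' hσ' => by
    rw [G.ER_eq_reward hv₀, G.ER_eq_reward hv₀]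
    exact reward_le_reward_rewardPunish hstart hstep hp hσ'
  exact ⟨fun h => ⟨σ, fun p => hstable p (h · p), houtcome⟩,
    fun l h => ⟨σ, fun p hpl => hstable p (h · p hpl), houtcome⟩⟩
end
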